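/- Quadratic equation for the auxiliary scalar: with the decomposition u^{n+1}=û^{n+1}+S^{n+1}ǔ^{n+1}, p^{n+1/2}=p̂^{n+1/2}−S^{n+1}p̌^{n+1/2}, where S^{n+1}=q^{n+1/2}/√(E(ũ^{n+1/2})+δ), the scalar S^{n+1} satisfies X₁(S^{n+1})² + X₂ S^{n+1} + X₃ = 0, where X₁ = (4/Δt)(E(ũ^{n+1/2})+δ) + (ν/4)‖∇ǔ^{n+1}‖², X₂ = (ν/2)(∇(û^{n+1}+u^n), ∇ǔ^{n+1}) − (4q^n/Δt)√(E(ũ^{n+1/2})+δ) − (1/2)(f^{n+1/2}, ǔ^{n+1}), and X₃ = (ν/4)‖∇(û^{n+1}+u^n)‖² − (1/2)(f^{n+1/2}, u^n+û^{n+1}). -/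

import Mathlib

open MeasureTheory

noncomputable section

namespace SAVNS

variable {d : ℕ}

/-- Partial derivative `∂ᵢ g` of a scalar field on `ℝ^d`. -/
def pd (g : (Fin d → ℝ) → ℝ) (i : Fin d) (x : Fin d → ℝ) : ℝ :=
  fderiv ℝ g x (Pi.single i 1)

/-- Divergence `∇·u` of a vector field. -/
def vdiv (u : (Fin d → ℝ) → (Fin d → ℝ)) (x : Fin d → ℝ) : ℝ :=
  ∑ i, pd (fun y => u y i) i x

/-- Laplacian `Δg` of a scalar field. -/
def lap (g : (Fin d → ℝ) → ℝ) (x : Fin d → ℝ) : ℝ :=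
  ∑ i, pd (fun y => pd g i y) i x

/-- The `i`-th component of the convection term `(u·∇)v`. -/
def conv (u v : (Fin d → ℝ) → (Fin d → ℝ)) (x : Fin d → ℝ) (i : Fin d) : ℝ :=
  ∑ j, u x j * pd (fun y => v y i) j x

/-- `|∇u|²` (pointwise). -/
def gradSq (u : (Fin d → ℝ) → (Fin d → ℝ)) (x : Fin d → ℝ) : ℝ :=
  ∑ i, ∑ j, (pd (fun y => u y i) j x) ^ 2

/-- `Σᵢⱼ ∂ⱼuᵢ ∂ⱼvᵢ` (pointwise), so that `∫_Ω` of it is `(∇u, ∇v)`. -/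
def gradIP (u v : (Fin d → ℝ) → (Fin d → ℝ)) (x : Fin d → ℝ) : ℝ :=
  ∑ i, ∑ j, pd (fun y => u y i) j x * pd (fun y => v y i) j x

/-- The `L²(Ω)` inner product of two vector fields. -/
def ipL2 (Ω : Set (Fin d → ℝ)) (u v : (Fin d → ℝ) → (Fin d → ℝ)) : ℝ :=
  ∫ x in Ω, ∑ i, u x i * v x i

/-- The total energy `E(u) = ½∫_Ω |u|²`. -/
def energy (Ω : Set (Fin d → ℝ)) (u : (Fin d → ℝ) → (Fin d → ℝ)) : ℝ :=
  (1 / 2) * ∫ x in Ω, ∑ i, (u x i) ^ 2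

/-- The extrapolated velocity `ũ^{n+1/2} = (3uⁿ - u^{n-1})/2`. -/
def utilde (un um : (Fin d → ℝ) → (Fin d → ℝ)) : (Fin d → ℝ) → (Fin d → ℝ) :=
  fun x i => (3 * un x i - um x i) / 2

/-- The Crank–Nicolson average `u^{n+1/2} = (uⁿ + u^{n+1})/2`. -/
def uhalf (un uv : (Fin d → ℝ) → (Fin d → ℝ)) : (Fin d → ℝ) → (Fin d → ℝ) :=
  fun x i => (un x i + uv x i) / 2

/-- One step of the semi-discrete SAV/Crank–Nicolson scheme for the Navier–Stokes
equations: given divergence-free `uⁿ = un`, `u^{n-1} = um` in `H¹₀(Ω)^d` and `qⁿ = qn`,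
the new iterate `u^{n+1} = uv ∈ H¹₀(Ω)^d`, `p^{n+1/2} = p`, `q^{n+1} = qv`
(with `q^{n+1/2} ≠ 0`) satisfies the momentum equation, the SAV update and `∇·u^{n+1} = 0`. -/
def SAVStep (Ω : Set (Fin d → ℝ)) (ν δ Δt : ℝ)
    (f un um uv : (Fin d → ℝ) → (Fin d → ℝ)) (p : (Fin d → ℝ) → ℝ) (qn qv : ℝ) : Prop :=
  (qn + qv) / 2 ≠ 0 ∧
  (∀ x ∈ Ω, ∀ i : Fin d,
    (uv x i - un x i) / Δt
      + ((qn + qv) / 2 / Real.sqrt (energy Ω (utilde un um) + δ)) *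
          conv (utilde un um) (utilde un um) x i
      - ν * lap (fun y => uhalf un uv y i) x
      + pd p i x = f x i) ∧
  ((qv - qn) / Δt
      = (1 / (2 * ((qn + qv) / 2))) *
          ipL2 Ω (fun y i => (uv y i - un y i) / Δt) (uhalf un uv)
        + (1 / (2 * Real.sqrt (energy Ω (utilde un um) + δ))) *
          ipL2 Ω (conv (utilde un um) (utilde un um)) (uhalf un uv)) ∧
  (∀ x ∈ Ω, vdiv uv x = 0) ∧
  ContDiff ℝ (⊤ : ℕ∞) (fun x => uv x) ∧ (∀ x ∈ frontier Ω, ∀ i, uv x i = 0)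

end SAVNS

namespace SAVNS

variable {d : ℕ}

theorem pd_contDiff {g : (Fin d → ℝ) → ℝ} (hg : ContDiff ℝ (⊤ : ℕ∞) g) (i : Fin d) :
    ContDiff ℝ (⊤ : ℕ∞) (pd g i) :=
  (hg.fderiv_right (by simp)).clm_apply contDiff_const

theorem intOn {Ω : Set (Fin d → ℝ)} (hΩb : Bornology.IsBounded Ω)
    {g : (Fin d → ℝ) → ℝ} (hg : Continuous g) : MeasureTheory.IntegrableOn g Ω := by
  refine ((hg.continuousOn).integrableOn_compact ?_).mono_set subset_closure
  exact Metric.isCompact_of_isClosed_isBounded isClosed_closure hΩb.closure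

theorem intOn1 {s : Set ℝ} (hb : Bornology.IsBounded s)
    {g : ℝ → ℝ} (hg : Continuous g) : MeasureTheory.IntegrableOn g s := by
  refine ((hg.continuousOn).integrableOn_compact ?_).mono_set subset_closure
  exact Metric.isCompact_of_isClosed_isBounded isClosed_closure hb.closure

theorem update_eq (c : Fin d → ℝ) (j : Fin d) :
    (fun t : ℝ => Function.update c j t)
      = fun t => c + (t - c j) • (Pi.single j 1 : Fin d → ℝ) := by
  funext t
  funext k
  by_cases h : k = j
  · subst h; simp
  · simp [Function.update_of_ne h, Pi.single_eq_of_ne h]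

theorem pd_line {g : (Fin d → ℝ) → ℝ} (hg : ContDiff ℝ (⊤ : ℕ∞) g) (c : Fin d → ℝ) (j : Fin d)
    (t : ℝ) :
    HasDerivAt (fun t => g (Function.update c j t)) (pd g j (Function.update c j t)) t := by
  have hL : HasDerivAt (fun t : ℝ => c + (t - c j) • (Pi.single j 1 : Fin d → ℝ))
      ((1:ℝ) • (Pi.single j 1 : Fin d → ℝ)) t :=
    (((hasDerivAt_id t).sub_const (c j)).smul_const _).const_add c
  rw [one_smul] at hL
  have hgd : HasFDerivAt g (fderiv ℝ g (Function.update c j t)) (Function.update c j t) :=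
    ((hg.differentiable (by simp)) _).hasFDerivAt
  have h2 : HasDerivAt (fun t => Function.update c j t) (Pi.single j 1 : Fin d → ℝ) t := by
    rw [update_eq c j]; exact hL
  exact hgd.comp_hasDerivAt t h2

theorem pd_congr {f g : (Fin d → ℝ) → ℝ} {x : Fin d → ℝ} (h : f =ᶠ[nhds x] g) (i : Fin d) :
    pd f i x = pd g i x := by
  unfold pd; rw [Filter.EventuallyEq.fderiv_eq h]

theorem pd_add {f g : (Fin d → ℝ) → ℝ} {x : Fin d → ℝ} (hf : DifferentiableAt ℝ f x)
    (hg : DifferentiableAt ℝ g x) (i : Fin d) :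
    pd (fun y => f y + g y) i x = pd f i x + pd g i x := by
  unfold pd; rw [fderiv_fun_add hf hg]; rfl

theorem pd_sub {f g : (Fin d → ℝ) → ℝ} {x : Fin d → ℝ} (hf : DifferentiableAt ℝ f x)
    (hg : DifferentiableAt ℝ g x) (i : Fin d) :
    pd (fun y => f y - g y) i x = pd f i x - pd g i x := by
  unfold pd; rw [fderiv_fun_sub hf hg]; rfl

theorem pd_mul {f g : (Fin d → ℝ) → ℝ} {x : Fin d → ℝ} (hf : DifferentiableAt ℝ f x)
    (hg : DifferentiableAt ℝ g x) (i : Fin d) :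
    pd (fun y => f y * g y) i x = f x * pd g i x + g x * pd f i x := by
  unfold pd; rw [fderiv_fun_mul hf hg]; rfl

theorem pd_const_mul {f : (Fin d → ℝ) → ℝ} {x : Fin d → ℝ} (hf : DifferentiableAt ℝ f x)
    (c : ℝ) (i : Fin d) :
    pd (fun y => c * f y) i x = c * pd f i x := by
  unfold pd; rw [fderiv_const_mul hf c]; rfl

theorem pd_div_const {f : (Fin d → ℝ) → ℝ} {x : Fin d → ℝ} (hf : DifferentiableAt ℝ f x)
    (c : ℝ) (i : Fin d) :
    pd (fun y => f y / c) i x = pd f i x / c := by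
  have h : (fun y => f y / c) = fun y => c⁻¹ * f y := by
    funext y; rw [div_eq_inv_mul]
  rw [h, pd_const_mul hf, div_eq_inv_mul]

theorem pd_sum {m : ℕ} {F : Fin m → (Fin d → ℝ) → ℝ} {x : Fin d → ℝ}
    (hF : ∀ k, DifferentiableAt ℝ (F k) x) (i : Fin d) :
    pd (fun y => ∑ k, F k y) i x = ∑ k, pd (F k) i x := by
  unfold pd
  rw [fderiv_fun_sum (fun k _ => hF k)]
  exact ContinuousLinearMap.sum_apply _ _ _

theorem frontier_preimage_subset' {α β : Type*} [TopologicalSpace α] [TopologicalSpace β]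
    {f : α → β} (hf : Continuous f) (s : Set β) :
    frontier (f ⁻¹' s) ⊆ f ⁻¹' (frontier s) := by
  intro x hx
  rw [frontier_eq_closure_inter_closure] at hx ⊢
  refine ⟨hf.closure_preimage_subset s hx.1, ?_⟩
  have hx2 := hx.2
  rw [← Set.preimage_compl] at hx2
  exact hf.closure_preimage_subset _ hx2

/-- 1D: the integral of a derivative over a bounded open set vanishes when the function
vanishes on the frontier. -/
theorem oneD (g : ℝ → ℝ) (hg : ContDiff ℝ (⊤ : ℕ∞) g) (s : Set ℝ) (ho : IsOpen s)
    (hb : Bornology.IsBounded s) (h0 : ∀ t ∈ frontier s, g t = 0) :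
    ∫ t in s, deriv g t = 0 := by
  classical
  set T : Set (Set ℝ) := (fun x => connectedComponentIn s x) '' s with hT
  have hTopen : ∀ C ∈ T, IsOpen C := by
    rintro C ⟨x, hx, rfl⟩; exact ho.connectedComponentIn
  have hTne : ∀ C ∈ T, C.Nonempty := by
    rintro C ⟨x, hx, rfl⟩; exact ⟨x, mem_connectedComponentIn hx⟩
  have hTdisj : T.PairwiseDisjoint id := by
    rintro C₁ hC₁ C₂ hC₂ hne
    obtain ⟨x₁, hx₁, rfl⟩ := hC₁
    obtain ⟨x₂, hx₂, rfl⟩ := hC₂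
    refine Set.disjoint_left.2 fun z hz₁ hz₂ => hne ?_
    simp only [id] at hz₁ hz₂ ⊢
    rw [connectedComponentIn_eq hz₁, connectedComponentIn_eq hz₂]
  have hcount : T.Countable := hTdisj.countable_of_isOpen hTopen hTne
  have hsU : s = ⋃ C : T, (C : Set ℝ) := by
    ext x
    constructor
    · intro hx
      exact Set.mem_iUnion.2 ⟨⟨_, ⟨x, hx, rfl⟩⟩, mem_connectedComponentIn hx⟩
    · intro hx
      obtain ⟨⟨C, hC⟩, hxC⟩ := Set.mem_iUnion.1 hx
      obtain ⟨y, hy, rfl⟩ := hC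
      exact connectedComponentIn_subset s y hxC
  have := hcount.to_subtype
  have hint : MeasureTheory.IntegrableOn (deriv g) s := intOn1 hb (hg.continuous_deriv (by simp))
  rw [hsU]
  rw [MeasureTheory.integral_iUnion (fun (C : T) => (hTopen _ C.2).measurableSet)
    (fun (C₁ C₂ : T) hne => hTdisj C₁.2 C₂.2 (Subtype.coe_injective.ne hne))
    (by rw [← hsU]; exact hint)]
  have hcomp : ∀ C : T, ∫ t in (C : Set ℝ), deriv g t = 0 := by
    rintro ⟨C, hC⟩
    obtain ⟨x, hx, rfl⟩ := hC
    set C := connectedComponentIn s x with hCdef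
    have hCo : IsOpen C := ho.connectedComponentIn
    have hxC : x ∈ C := mem_connectedComponentIn hx
    have hCsub : C ⊆ s := connectedComponentIn_subset s x
    have hCb : Bornology.IsBounded C := hb.subset hCsub
    have hbdb : BddBelow C := hCb.bddBelow
    have hbda : BddAbove C := hCb.bddAbove
    have hCne : C.Nonempty := ⟨x, hxC⟩
    set a := sInf C with ha
    set b := sSup C with hbb
    have hIoo : C = Set.Ioo a b := by
      ext t
      constructor
      · intro ht
        obtain ⟨ε, hε, hball⟩ := Metric.isOpen_iff.1 hCo t ht
        have h1 : t - ε/2 ∈ C := hball (by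
          simp only [Metric.mem_ball, Real.dist_eq]
          rw [abs_of_nonpos (by linarith)]
          linarith)
        have h2 : t + ε/2 ∈ C := hball (by
          simp only [Metric.mem_ball, Real.dist_eq]
          rw [abs_of_nonneg (by linarith)]
          linarith)
        exact ⟨lt_of_le_of_lt (csInf_le hbdb h1) (by linarith),
               lt_of_lt_of_le (by linarith) (le_csSup hbda h2)⟩
      · rintro ⟨h1, h2⟩
        obtain ⟨u, hu, hut⟩ := exists_lt_of_csInf_lt hCne h1
        obtain ⟨v, hv, htv⟩ := exists_lt_of_lt_csSup hCne h2
        exact (isPreconnected_connectedComponentIn).Icc_subset hu hv ⟨hut.le, htv.le⟩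
    have hfr : ∀ c : ℝ, c ∈ closure C → c ∉ C → g c = 0 := by
      intro c hcc hcnot
      refine h0 c ?_
      rw [ho.frontier_eq]
      refine ⟨closure_mono hCsub hcc, fun hcs => hcnot ?_⟩
      have hcomp_c : c ∈ connectedComponentIn s c := mem_connectedComponentIn hcs
      have hopen_c : IsOpen (connectedComponentIn s c) := ho.connectedComponentIn
      obtain ⟨z, hz1, hz2⟩ := mem_closure_iff.1 hcc _ hopen_c hcomp_c
      have e1 : connectedComponentIn s c = connectedComponentIn s z :=
        connectedComponentIn_eq hz1
      have e2 : C = connectedComponentIn s z := connectedComponentIn_eq hz2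
      rw [e2, ← e1]
      exact hcomp_c
    have hga : g a = 0 := by
      refine hfr a (csInf_mem_closure hCne hbdb) ?_
      rw [hIoo]; rintro ⟨h, -⟩; exact lt_irrefl a h
    have hgb : g b = 0 := by
      refine hfr b (csSup_mem_closure hCne hbda) ?_
      rw [hIoo]; rintro ⟨-, h⟩; exact lt_irrefl b h
    have hab : a ≤ b := (csInf_le hbdb hxC).trans (le_csSup hbda hxC)
    show (∫ t in C, deriv g t) = 0
    rw [hIoo, ← integral_Ioc_eq_integral_Ioo, ← intervalIntegral.integral_of_le hab]
    rw [intervalIntegral.integral_deriv_eq_sub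
      (fun y _ => (hg.differentiable (by simp)).differentiableAt)
      ((hg.continuous_deriv (by simp)).intervalIntegrable a b)]
    rw [hga, hgb, sub_zero]
  simp only [hcomp, tsum_zero]

/-- The integral of a partial derivative over a bounded open set vanishes when the
function vanishes on the frontier (key integration-by-parts building block). -/
theorem pd_integral_zero {n : ℕ} (Ω : Set (Fin (n+1) → ℝ)) (hΩo : IsOpen Ω)
    (hΩb : Bornology.IsBounded Ω) (g : (Fin (n+1) → ℝ) → ℝ) (hg : ContDiff ℝ (⊤ : ℕ∞) g)
    (hg0 : ∀ x ∈ frontier Ω, g x = 0) (j : Fin (n+1)) :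
    ∫ x in Ω, pd g j x = 0 := by
  classical
  set H : (Fin (n+1) → ℝ) → ℝ := Ω.indicator (pd g j) with hH
  have hHint : Integrable H := (intOn hΩb (pd_contDiff hg j).continuous).integrable_indicator
    hΩo.measurableSet
  have h1 : ∫ x in Ω, pd g j x = ∫ x, H x := (integral_indicator hΩo.measurableSet).symm
  set e := MeasurableEquiv.piFinSuccAbove (fun _ : Fin (n+1) => ℝ) j with he
  have mp := volume_preserving_piFinSuccAbove (fun _ : Fin (n+1) => ℝ) j
  have mps : MeasurePreserving e.symm := MeasurePreserving.symm _ mp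
  have h2 : ∫ z : ℝ × (Fin n → ℝ), H (e.symm z) = ∫ x, H x :=
    mps.integral_comp e.symm.measurableEmbedding H
  have hHint2 : Integrable (fun z : ℝ × (Fin n → ℝ) => H (e.symm z)) :=
    (mps.integrable_comp_emb e.symm.measurableEmbedding).mpr hHint
  obtain ⟨R, hR⟩ := hΩb.subset_ball 0
  have hinner : ∀ y : Fin n → ℝ, ∫ t : ℝ, H (e.symm (t, y)) = 0 := by
    intro y
    set c : Fin (n+1) → ℝ := e.symm (0, y) with hc
    have hline : ∀ t : ℝ, e.symm (t, y) = Function.update c j t := by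
      intro t
      funext k
      refine Fin.succAboveCases j ?_ ?_ k
      · simp [he, hc, MeasurableEquiv.piFinSuccAbove_symm_apply]
      · intro m
        have hne : j.succAbove m ≠ j := Fin.succAbove_ne j m
        simp [he, hc, MeasurableEquiv.piFinSuccAbove_symm_apply, Function.update_of_ne hne]
    set sy : Set ℝ := (fun t => Function.update c j t) ⁻¹' Ω with hsy
    have hLcont : Continuous (fun t : ℝ => Function.update c j t) := by
      rw [update_eq]
      exact continuous_const.add (((continuous_id.sub continuous_const).smul continuous_const))
    have hsyo : IsOpen sy := hΩo.preimage hLcont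
    have hsyb : Bornology.IsBounded sy := by
      refine (Metric.isBounded_ball (x := (0:ℝ)) (r := R)).subset fun t ht => ?_
      have h3 : Function.update c j t ∈ Metric.ball 0 R := hR ht
      rw [mem_ball_zero_iff] at h3 ⊢
      calc ‖t‖ = ‖Function.update c j t j‖ := by rw [Function.update_self]
        _ ≤ ‖Function.update c j t‖ := norm_le_pi_norm _ j
        _ < R := h3
    set φ : ℝ → ℝ := fun t => g (Function.update c j t) with hφ
    have hupd : ContDiff ℝ (⊤ : ℕ∞) (fun t : ℝ => Function.update c j t) := by
      rw [update_eq c j]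
      exact contDiff_const.add ((contDiff_id.sub contDiff_const).smul contDiff_const)
    have hφsm : ContDiff ℝ (⊤ : ℕ∞) φ := hg.comp hupd
    have hφ0 : ∀ t ∈ frontier sy, φ t = 0 := fun t ht =>
      hg0 _ (frontier_preimage_subset' hLcont Ω ht)
    have hderiv : ∀ t, deriv φ t = pd g j (Function.update c j t) := fun t =>
      (pd_line hg c j t).deriv
    have h4 : ∀ t : ℝ, H (e.symm (t, y)) = sy.indicator (fun t => deriv φ t) t := by
      intro t
      rw [hline t, hH]
      by_cases h : t ∈ sy
      · rw [Set.indicator_of_mem h, Set.indicator_of_mem (by exact h), hderiv]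
      · rw [Set.indicator_of_notMem h, Set.indicator_of_notMem (by exact h)]
    simp only [h4]
    rw [integral_indicator hsyo.measurableSet]
    exact oneD φ hφsm sy hsyo hsyb hφ0
  rw [h1, ← h2]
  rw [MeasureTheory.Measure.volume_eq_prod] at hHint2 ⊢
  rw [integral_prod_symm _ hHint2]
  simp only [hinner, integral_zero]

end SAVNS

namespace SAVNS

theorem sum_regroup2 {m : ℕ} (S : ℝ) (w a b c : Fin m → ℝ) :
    ∑ i, w i * (a i + S * b i - c i)
      = (∑ i, a i * w i) + S * (∑ i, b i * w i) - (∑ i, c i * w i) := by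
  rw [Finset.mul_sum, ← Finset.sum_add_distrib, ← Finset.sum_sub_distrib]
  exact Finset.sum_congr rfl fun i _ => by ring

theorem sum_regroup {m : ℕ} (ν px : ℝ) (w Pp : Fin m → ℝ) (D1 D2 : Fin m → Fin m → ℝ) :
    ∑ j, (ν * (∑ i, (w i * D2 i j + D1 i j * D1 i j)) - (px * D1 j j + w j * Pp j))
      = ν * (∑ i, ∑ j, D1 i j ^ 2) + (∑ i, w i * (ν * (∑ j, D2 i j) - Pp i))
        - px * (∑ j, D1 j j) := by
  have h1 : ∀ i, ∑ j, (w i * D2 i j + D1 i j * D1 i j)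
      = w i * (∑ j, D2 i j) + ∑ j, D1 i j ^ 2 := by
    intro i
    rw [Finset.sum_add_distrib, ← Finset.mul_sum]
    congr 1
    exact Finset.sum_congr rfl fun j _ => by ring
  calc ∑ j, (ν * (∑ i, (w i * D2 i j + D1 i j * D1 i j)) - (px * D1 j j + w j * Pp j))
      = ν * (∑ j, ∑ i, (w i * D2 i j + D1 i j * D1 i j)) - ∑ j, (px * D1 j j + w j * Pp j) := by
        rw [Finset.sum_sub_distrib, ← Finset.mul_sum]
    _ = ν * (∑ i, (w i * (∑ j, D2 i j) + ∑ j, D1 i j ^ 2)) - ∑ j, (px * D1 j j + w j * Pp j) := by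
        rw [Finset.sum_comm]
        congr 1
        rw [Finset.sum_congr rfl fun i _ => h1 i]
    _ = _ := by
        rw [Finset.sum_add_distrib, Finset.sum_add_distrib, mul_add, ← Finset.mul_sum]
        rw [Finset.sum_congr rfl (fun i (_ : i ∈ Finset.univ) =>
          (by ring : w i * (ν * (∑ j, D2 i j) - Pp i) = ν * (w i * ∑ j, D2 i j) - w i * Pp i))]
        rw [Finset.sum_sub_distrib, ← Finset.mul_sum]
        ring

end SAVNS

namespace SAVNS

theorem sum_regroup3 {m : ℕ} (S : ℝ) (A B : Fin m → Fin m → ℝ) :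
    ∑ i, ∑ j, ((A i j + S * B i j) / 2) ^ 2
      = 1/4 * (∑ i, ∑ j, A i j ^ 2) + S/2 * (∑ i, ∑ j, A i j * B i j)
        + S^2/4 * (∑ i, ∑ j, B i j ^ 2) := by
  rw [Finset.mul_sum, Finset.mul_sum, Finset.mul_sum, ← Finset.sum_add_distrib,
    ← Finset.sum_add_distrib]
  refine Finset.sum_congr rfl fun i _ => ?_
  rw [Finset.mul_sum, Finset.mul_sum, Finset.mul_sum, ← Finset.sum_add_distrib,
    ← Finset.sum_add_distrib]
  exact Finset.sum_congr rfl fun j _ => by ring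

end SAVNS

/-- **Quadratic equation for the auxiliary scalar** (identity (2.16)): with the decomposition
`u^{n+1} = û^{n+1} + S^{n+1} ǔ^{n+1}`, `p^{n+1/2} = p̂^{n+1/2} - S^{n+1} p̌^{n+1/2}`, where
`S^{n+1} = q^{n+1/2}/√(E(ũ^{n+1/2})+δ)` and `(û, p̂)`, `(ǔ, p̌)` solve the two generalized
Stokes problems (2.9)-(2.10) and (2.11)-(2.12), the scalar `S^{n+1}` satisfies
`X₁ (S^{n+1})² + X₂ S^{n+1} + X₃ = 0` with
`X₁ = (4/Δt)(E(ũ^{n+1/2})+δ) + (ν/4)‖∇ǔ^{n+1}‖²`,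
`X₂ = (ν/2)(∇(û^{n+1}+uⁿ), ∇ǔ^{n+1}) - (4qⁿ/Δt)√(E(ũ^{n+1/2})+δ) - ½(f^{n+1/2}, ǔ^{n+1})`,
`X₃ = (ν/4)‖∇(û^{n+1}+uⁿ)‖² - ½(f^{n+1/2}, uⁿ+û^{n+1})`. -/
theorem SAVNS.quadratic_equation_for_S
    (d : ℕ) (hd : d = 2 ∨ d = 3)
    (Ω : Set (Fin d → ℝ)) (hΩo : IsOpen Ω) (hΩb : Bornology.IsBounded Ω)
    (ν δ Δt : ℝ) (hν : 0 < ν) (hδ : 0 < δ) (hΔt : 0 < Δt)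
    (f un um uv uhat ucheck : (Fin d → ℝ) → (Fin d → ℝ))
    (p phat pcheck : (Fin d → ℝ) → ℝ) (qn qv : ℝ)
    -- smoothness ("all functions are smooth enough")
    (hsm_un : ContDiff ℝ (⊤ : ℕ∞) un) (hsm_um : ContDiff ℝ (⊤ : ℕ∞) um)
    (hsm_uv : ContDiff ℝ (⊤ : ℕ∞) uv) (hsm_p : ContDiff ℝ (⊤ : ℕ∞) p) (hsm_f : Continuous f)
    (hsm_uhat : ContDiff ℝ (⊤ : ℕ∞) uhat) (hsm_ucheck : ContDiff ℝ (⊤ : ℕ∞) ucheck)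
    (hsm_phat : ContDiff ℝ (⊤ : ℕ∞) phat) (hsm_pcheck : ContDiff ℝ (⊤ : ℕ∞) pcheck)
    -- `uⁿ, u^{n-1} ∈ H¹₀(Ω)^d` divergence-free
    (hbc_un : ∀ x ∈ frontier Ω, ∀ i, un x i = 0)
    (hbc_um : ∀ x ∈ frontier Ω, ∀ i, um x i = 0)
    (hdiv_un : ∀ x ∈ Ω, SAVNS.vdiv un x = 0)
    (hdiv_um : ∀ x ∈ Ω, SAVNS.vdiv um x = 0)
    -- one step of the semi-discrete SAV/Crank–Nicolson scheme
    (hstep : SAVNS.SAVStep Ω ν δ Δt f un um uv p qn qv)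
    -- `(û^{n+1}, p̂^{n+1/2}) ∈ H¹₀(Ω)^d × L²₀(Ω)` solves
    -- `û/Δt - (ν/2)Δû + ∇p̂ = f^{n+1/2} + uⁿ/Δt + (ν/2)Δuⁿ`, `∇·û = 0`
    (hbc_uhat : ∀ x ∈ frontier Ω, ∀ i, uhat x i = 0)
    (hmean_phat : (∫ x in Ω, phat x) = 0)
    (heq_uhat : ∀ x ∈ Ω, ∀ i : Fin d,
      uhat x i / Δt - ν / 2 * SAVNS.lap (fun y => uhat y i) x + SAVNS.pd phat i x
        = f x i + un x i / Δt + ν / 2 * SAVNS.lap (fun y => un y i) x)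
    (hdiv_uhat : ∀ x ∈ Ω, SAVNS.vdiv uhat x = 0)
    -- `(ǔ^{n+1}, p̌^{n+1/2}) ∈ H¹₀(Ω)^d × L²₀(Ω)` solves
    -- `ǔ/Δt - (ν/2)Δǔ - ∇p̌ = -ũ^{n+1/2}·∇ũ^{n+1/2}`, `∇·ǔ = 0`
    (hbc_ucheck : ∀ x ∈ frontier Ω, ∀ i, ucheck x i = 0)
    (hmean_pcheck : (∫ x in Ω, pcheck x) = 0)
    (heq_ucheck : ∀ x ∈ Ω, ∀ i : Fin d,
      ucheck x i / Δt - ν / 2 * SAVNS.lap (fun y => ucheck y i) x - SAVNS.pd pcheck i x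
        = -SAVNS.conv (SAVNS.utilde un um) (SAVNS.utilde un um) x i)
    (hdiv_ucheck : ∀ x ∈ Ω, SAVNS.vdiv ucheck x = 0)
    -- the decomposition `u^{n+1} = û + S ǔ`, `p^{n+1/2} = p̂ - S p̌` with
    -- `S = q^{n+1/2}/√(E(ũ^{n+1/2})+δ)`
    (hdec_u : ∀ x ∈ Ω, ∀ i : Fin d,
      uv x i = uhat x i
        + ((qn + qv) / 2 / Real.sqrt (SAVNS.energy Ω (SAVNS.utilde un um) + δ)) * ucheck x i)
    (hdec_p : ∀ x ∈ Ω,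
      p x = phat x
        - ((qn + qv) / 2 / Real.sqrt (SAVNS.energy Ω (SAVNS.utilde un um) + δ)) * pcheck x) :
    ((4 / Δt) * (SAVNS.energy Ω (SAVNS.utilde un um) + δ)
        + ν / 4 * ∫ x in Ω, SAVNS.gradSq ucheck x) *
        ((qn + qv) / 2 / Real.sqrt (SAVNS.energy Ω (SAVNS.utilde un um) + δ)) ^ 2
      + (ν / 2 * (∫ x in Ω, SAVNS.gradIP (fun y i => uhat y i + un y i) ucheck x)
          - (4 * qn / Δt) * Real.sqrt (SAVNS.energy Ω (SAVNS.utilde un um) + δ)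
          - 1 / 2 * SAVNS.ipL2 Ω f ucheck) *
        ((qn + qv) / 2 / Real.sqrt (SAVNS.energy Ω (SAVNS.utilde un um) + δ))
      + (ν / 4 * (∫ x in Ω, SAVNS.gradSq (fun y i => uhat y i + un y i) x)
          - 1 / 2 * SAVNS.ipL2 Ω f (fun y i => un y i + uhat y i)) = 0 := by
  classical
  obtain ⟨n, rfl⟩ : ∃ n, d = n + 1 := ⟨d - 1, by rcases hd with h | h <;> omega⟩
  obtain ⟨hq0, hmom, hqup, hdivuv, hsmuv2, hbcuv⟩ := hstep
  set E := SAVNS.energy Ω (SAVNS.utilde un um) with hEdef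
  have hE : 0 ≤ E := by
    rw [hEdef]
    unfold SAVNS.energy
    have h1 : 0 ≤ ∫ x in Ω, ∑ i, (SAVNS.utilde un um x i) ^ 2 :=
      MeasureTheory.setIntegral_nonneg hΩo.measurableSet
        (fun x _ => Finset.sum_nonneg fun i _ => sq_nonneg _)
    linarith
  set r := Real.sqrt (E + δ) with hrdef
  have hr : 0 < r := Real.sqrt_pos.2 (by linarith)
  have hr2 : r * r = E + δ := Real.mul_self_sqrt (by linarith)
  set q := (qn + qv) / 2 with hqdef
  set S := q / r with hSdef
  have hSr : S * r = q := div_mul_cancel₀ q hr.ne'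
  -- component smoothness
  have hun_i : ∀ i, ContDiff ℝ (⊤ : ℕ∞) (fun y => un y i) := fun i => contDiff_pi.mp hsm_un i
  have hum_i : ∀ i, ContDiff ℝ (⊤ : ℕ∞) (fun y => um y i) := fun i => contDiff_pi.mp hsm_um i
  have huv_i : ∀ i, ContDiff ℝ (⊤ : ℕ∞) (fun y => uv y i) := fun i => contDiff_pi.mp hsm_uv i
  have huhat_i : ∀ i, ContDiff ℝ (⊤ : ℕ∞) (fun y => uhat y i) := fun i => contDiff_pi.mp hsm_uhat i
  have hucheck_i : ∀ i, ContDiff ℝ (⊤ : ℕ∞) (fun y => ucheck y i) :=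
    fun i => contDiff_pi.mp hsm_ucheck i
  have hf_i : ∀ i, Continuous (fun y => f y i) := fun i => (continuous_apply i).comp hsm_f
  have hut_i : ∀ i, ContDiff ℝ (⊤ : ℕ∞) (fun y => SAVNS.utilde un um y i) := fun i => by
    show ContDiff ℝ (⊤ : ℕ∞) fun y => (3 * un y i - um y i) / 2
    exact ((contDiff_const.mul (hun_i i)).sub (hum_i i)).div_const 2
  have hw_i : ∀ i, ContDiff ℝ (⊤ : ℕ∞) (fun y => SAVNS.uhalf un uv y i) := fun i => by
    show ContDiff ℝ (⊤ : ℕ∞) fun y => (un y i + uv y i) / 2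
    exact ((hun_i i).add (huv_i i)).div_const 2
  have dA : ∀ {h : (Fin (n+1) → ℝ) → ℝ}, ContDiff ℝ (⊤ : ℕ∞) h → ∀ x, DifferentiableAt ℝ h x :=
    fun hh x => (hh.differentiable (by simp)) x
  have hconv_c : ∀ i,
      Continuous (fun x => SAVNS.conv (SAVNS.utilde un um) (SAVNS.utilde un um) x i) := by
    intro i
    show Continuous fun x => ∑ j, SAVNS.utilde un um x j *
      SAVNS.pd (fun y => SAVNS.utilde un um y i) j x
    exact continuous_finset_sum _ fun j _ =>
      ((hut_i j).continuous.mul (SAVNS.pd_contDiff (hut_i i) j).continuous)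
  set w := SAVNS.uhalf un uv with hwdef
  -- the flux vector field
  set gflux : Fin (n+1) → (Fin (n+1) → ℝ) → ℝ := fun j x =>
    ν * (∑ i, w x i * SAVNS.pd (fun y => w y i) j x) - p x * w x j with hgflux
  have hsum_sm : ∀ j, ContDiff ℝ (⊤ : ℕ∞) (fun y => ∑ i, w y i * SAVNS.pd (fun z => w z i) j y) :=
    fun j => ContDiff.sum fun i _ => (hw_i i).mul (SAVNS.pd_contDiff (hw_i i) j)
  have hpw_sm : ∀ j, ContDiff ℝ (⊤ : ℕ∞) (fun y => p y * w y j) := fun j => hsm_p.mul (hw_i j)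
  have hgflux_sm : ∀ j, ContDiff ℝ (⊤ : ℕ∞) (gflux j) := fun j =>
    ((contDiff_const.mul (hsum_sm j)).sub (hpw_sm j))
  have hgflux_bc : ∀ j, ∀ x ∈ frontier Ω, gflux j x = 0 := by
    intro j x hx
    have hw0 : ∀ i, w x i = 0 := fun i => by
      show (un x i + uv x i) / 2 = 0
      rw [hbc_un x hx i, hbcuv x hx i]; norm_num
    simp only [hgflux, hw0, mul_zero, zero_mul, Finset.sum_const_zero, sub_zero]
  have hdiv0 : ∫ x in Ω, (∑ j, SAVNS.pd (gflux j) j x) = 0 := by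
    rw [MeasureTheory.integral_finset_sum _
      (fun j _ => SAVNS.intOn hΩb (SAVNS.pd_contDiff (hgflux_sm j) j).continuous)]
    exact Finset.sum_eq_zero fun j _ =>
      SAVNS.pd_integral_zero Ω hΩo hΩb _ (hgflux_sm j) (hgflux_bc j) j
  -- pointwise identity on Ω
  have hpt : ∀ x ∈ Ω, ∑ j, SAVNS.pd (gflux j) j x
      = ν * SAVNS.gradSq w x
        + ((∑ i, (uv x i - un x i) / Δt * w x i)
          + S * (∑ i, SAVNS.conv (SAVNS.utilde un um) (SAVNS.utilde un um) x i * w x i)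
          - (∑ i, f x i * w x i)) := by
    intro x hx
    have hA : ∀ j, SAVNS.pd (gflux j) j x
        = ν * (∑ i, (w x i * SAVNS.pd (fun y => SAVNS.pd (fun z => w z i) j y) j x
            + SAVNS.pd (fun y => w y i) j x * SAVNS.pd (fun y => w y i) j x))
          - (p x * SAVNS.pd (fun y => w y j) j x + w x j * SAVNS.pd p j x) := by
      intro j
      simp only [hgflux]
      rw [SAVNS.pd_sub (dA (contDiff_const.mul (hsum_sm j)) x) (dA (hpw_sm j) x),
          SAVNS.pd_const_mul (dA (hsum_sm j) x) ν,
          SAVNS.pd_sum (fun i => dA ((hw_i i).mul (SAVNS.pd_contDiff (hw_i i) j)) x),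
          SAVNS.pd_mul (dA hsm_p x) (dA (hw_i j) x)]
      congr 2
      exact Finset.sum_congr rfl fun i _ =>
        SAVNS.pd_mul (dA (hw_i i) x) (dA (SAVNS.pd_contDiff (hw_i i) j) x) j
    rw [Finset.sum_congr rfl fun j _ => hA j]
    rw [SAVNS.sum_regroup ν (p x) (fun i => w x i) (fun i => SAVNS.pd p i x)
        (fun i j => SAVNS.pd (fun y => w y i) j x)
        (fun i j => SAVNS.pd (fun y => SAVNS.pd (fun z => w z i) j y) j x)]
    have hdivw : (∑ j, SAVNS.pd (fun y => w y j) j x) = 0 := by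
      have hj : ∀ j, SAVNS.pd (fun y => w y j) j x
          = (SAVNS.pd (fun y => un y j) j x + SAVNS.pd (fun y => uv y j) j x) / 2 := by
        intro j
        have hrfl : (fun y => w y j) = fun y => (un y j + uv y j) / 2 := rfl
        rw [hrfl, SAVNS.pd_div_const (dA ((hun_i j).add (huv_i j)) x) 2,
            SAVNS.pd_add (dA (hun_i j) x) (dA (huv_i j) x)]
      rw [Finset.sum_congr rfl fun j _ => hj j, ← Finset.sum_div, Finset.sum_add_distrib]
      have h1 := hdiv_un x hx
      have h2 := hdivuv x hx
      simp only [SAVNS.vdiv] at h1 h2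
      rw [h1, h2]
      norm_num
    rw [hdivw, mul_zero, sub_zero]
    have hlap : ∀ i, SAVNS.lap (fun y => w y i) x
        = ∑ j, SAVNS.pd (fun y => SAVNS.pd (fun z => w z i) j y) j x := fun i => rfl
    have hmom2 : ∀ i, w x i * (ν * (∑ j, SAVNS.pd (fun y => SAVNS.pd (fun z => w z i) j y) j x)
          - SAVNS.pd p i x)
        = w x i * ((uv x i - un x i) / Δt
          + S * SAVNS.conv (SAVNS.utilde un um) (SAVNS.utilde un um) x i - f x i) := by
      intro i
      have h := hmom x hx i
      rw [← hlap i]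
      have : ν * SAVNS.lap (fun y => w y i) x - SAVNS.pd p i x
          = (uv x i - un x i) / Δt
            + S * SAVNS.conv (SAVNS.utilde un um) (SAVNS.utilde un um) x i - f x i := by
        linarith
      rw [this]
    rw [Finset.sum_congr rfl fun i _ => hmom2 i]
    rw [SAVNS.sum_regroup2 S (fun i => w x i) (fun i => (uv x i - un x i) / Δt)
        (fun i => SAVNS.conv (SAVNS.utilde un um) (SAVNS.utilde un um) x i)
        (fun i => f x i)]
    rfl
  -- continuity of the integrands
  have hw_c : ∀ i, Continuous (fun x => w x i) := fun i => (hw_i i).continuous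
  have cGw : Continuous (fun x => SAVNS.gradSq w x) := by
    show Continuous fun x => ∑ i, ∑ j, SAVNS.pd (fun y => w y i) j x ^ 2
    exact continuous_finset_sum _ fun i _ => continuous_finset_sum _ fun j _ =>
      ((SAVNS.pd_contDiff (hw_i i) j).continuous.pow 2)
  have cT1 : Continuous (fun x => ∑ i, (uv x i - un x i) / Δt * w x i) :=
    continuous_finset_sum _ fun i _ =>
      ((((huv_i i).continuous.sub (hun_i i).continuous).div_const Δt).mul (hw_c i))
  have cT2 : Continuous (fun x =>
      ∑ i, SAVNS.conv (SAVNS.utilde un um) (SAVNS.utilde un um) x i * w x i) :=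
    continuous_finset_sum _ fun i _ => (hconv_c i).mul (hw_c i)
  have cT3 : Continuous (fun x => ∑ i, f x i * w x i) :=
    continuous_finset_sum _ fun i _ => (hf_i i).mul (hw_c i)
  -- tested momentum equation
  have hEqM : (∫ x in Ω, ∑ i, (uv x i - un x i) / Δt * w x i)
      + S * (∫ x in Ω, ∑ i, SAVNS.conv (SAVNS.utilde un um) (SAVNS.utilde un um) x i * w x i)
      - (∫ x in Ω, ∑ i, f x i * w x i)
      + ν * (∫ x in Ω, SAVNS.gradSq w x) = 0 := by
    have h := hdiv0
    rw [MeasureTheory.setIntegral_congr_fun hΩo.measurableSet (fun x hx => hpt x hx)] at h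
    have iT1 : MeasureTheory.IntegrableOn
        (fun x => ∑ i, (uv x i - un x i) / Δt * w x i) Ω := SAVNS.intOn hΩb cT1
    have iT2 : MeasureTheory.IntegrableOn (fun x =>
        S * ∑ i, SAVNS.conv (SAVNS.utilde un um) (SAVNS.utilde un um) x i * w x i) Ω := by
      exact (SAVNS.intOn hΩb cT2).const_mul S
    have iT3 : MeasureTheory.IntegrableOn (fun x => ∑ i, f x i * w x i) Ω :=
      SAVNS.intOn hΩb cT3
    have iT12 : MeasureTheory.IntegrableOn (fun x =>
        (∑ i, (uv x i - un x i) / Δt * w x i)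
          + S * ∑ i, SAVNS.conv (SAVNS.utilde un um) (SAVNS.utilde un um) x i * w x i) Ω := by
      exact iT1.add iT2
    have iT123 : MeasureTheory.IntegrableOn (fun x =>
        (∑ i, (uv x i - un x i) / Δt * w x i)
          + S * (∑ i, SAVNS.conv (SAVNS.utilde un um) (SAVNS.utilde un um) x i * w x i)
          - ∑ i, f x i * w x i) Ω := by
      exact iT12.sub iT3
    have iGw : MeasureTheory.IntegrableOn (fun x => ν * SAVNS.gradSq w x) Ω :=
      SAVNS.intOn hΩb (continuous_const.mul cGw)
    rw [MeasureTheory.integral_add iGw iT123, MeasureTheory.integral_sub iT12 iT3,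
      MeasureTheory.integral_add iT1 iT2, MeasureTheory.integral_const_mul,
      MeasureTheory.integral_const_mul] at h
    linarith
  -- the SAV update tested
  have hI1 : SAVNS.ipL2 Ω (fun y i => (uv y i - un y i) / Δt) w
      = ∫ x in Ω, ∑ i, (uv x i - un x i) / Δt * w x i := rfl
  have hI2 : SAVNS.ipL2 Ω (SAVNS.conv (SAVNS.utilde un um) (SAVNS.utilde un um)) w
      = ∫ x in Ω, ∑ i, SAVNS.conv (SAVNS.utilde un um) (SAVNS.utilde un um) x i * w x i := rfl
  have hEqQ : (∫ x in Ω, ∑ i, (uv x i - un x i) / Δt * w x i)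
      + S * (∫ x in Ω, ∑ i, SAVNS.conv (SAVNS.utilde un um) (SAVNS.utilde un um) x i * w x i)
      = (4 * S^2 * (E + δ) - 4 * S * r * qn) / Δt := by
    have h := hqup
    rw [hI1, hI2] at h
    set A := ∫ x in Ω, ∑ i, (uv x i - un x i) / Δt * w x i with hAdef
    set B := ∫ x in Ω, ∑ i, SAVNS.conv (SAVNS.utilde un um) (SAVNS.utilde un um) x i * w x i
      with hBdef
    have hqv : qv = 2 * q - qn := by rw [hqdef]; ring
    have hr' : r ≠ 0 := hr.ne'
    have hΔ : Δt ≠ 0 := hΔt.ne'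
    have h2 := congrArg (fun z => (2*q) * z) h
    simp only [mul_add] at h2
    have e1 : 2*q*(1/(2*q)*A) = A := by field_simp
    have e2 : 2*q*(1/(2*r)*B) = S*B := by rw [hSdef]; field_simp
    rw [e1, e2] at h2
    have h3 : A + S * B = 2*q*((qv - qn)/Δt) := by linarith
    rw [h3, hqv, ← hSr, ← hr2]
    ring
  -- decomposition of the gradient square
  have hpdw_dec : ∀ x ∈ Ω, ∀ (i j : Fin (n+1)), SAVNS.pd (fun y => w y i) j x
      = (SAVNS.pd (fun y => uhat y i + un y i) j x + S * SAVNS.pd (fun y => ucheck y i) j x)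
        / 2 := by
    intro x hx i j
    have hev : (fun y => uv y i) =ᶠ[nhds x] fun y => uhat y i + S * ucheck y i := by
      filter_upwards [hΩo.mem_nhds hx] with y hy
      exact hdec_u y hy i
    have hrfl : (fun y => w y i) = fun y => (un y i + uv y i) / 2 := rfl
    rw [hrfl, SAVNS.pd_div_const (dA ((hun_i i).add (huv_i i)) x) 2,
        SAVNS.pd_add (dA (hun_i i) x) (dA (huv_i i) x),
        SAVNS.pd_congr hev j,
        SAVNS.pd_add (dA (huhat_i i) x) (dA (contDiff_const.mul (hucheck_i i)) x),
        SAVNS.pd_const_mul (dA (hucheck_i i) x) S,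
        SAVNS.pd_add (dA (huhat_i i) x) (dA (hun_i i) x)]
    ring
  have hptG : ∀ x ∈ Ω, SAVNS.gradSq w x
      = 1/4 * SAVNS.gradSq (fun y i => uhat y i + un y i) x
        + S/2 * SAVNS.gradIP (fun y i => uhat y i + un y i) ucheck x
        + S^2/4 * SAVNS.gradSq ucheck x := by
    intro x hx
    simp only [SAVNS.gradSq, SAVNS.gradIP]
    rw [Finset.sum_congr rfl fun i (_ : i ∈ Finset.univ) =>
      Finset.sum_congr rfl fun j (_ : j ∈ Finset.univ) => by rw [hpdw_dec x hx i j]]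
    exact SAVNS.sum_regroup3 S _ _
  have cG1 : Continuous (fun x => SAVNS.gradSq (fun y i => uhat y i + un y i) x) := by
    show Continuous fun x => ∑ i, ∑ j, SAVNS.pd (fun y => uhat y i + un y i) j x ^ 2
    exact continuous_finset_sum _ fun i _ => continuous_finset_sum _ fun j _ =>
      ((SAVNS.pd_contDiff ((huhat_i i).add (hun_i i)) j).continuous.pow 2)
  have cG2 : Continuous (fun x => SAVNS.gradIP (fun y i => uhat y i + un y i) ucheck x) := by
    show Continuous fun x => ∑ i, ∑ j, SAVNS.pd (fun y => uhat y i + un y i) j x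
      * SAVNS.pd (fun y => ucheck y i) j x
    exact continuous_finset_sum _ fun i _ => continuous_finset_sum _ fun j _ =>
      ((SAVNS.pd_contDiff ((huhat_i i).add (hun_i i)) j).continuous.mul
        (SAVNS.pd_contDiff (hucheck_i i) j).continuous)
  have cG3 : Continuous (fun x => SAVNS.gradSq ucheck x) := by
    show Continuous fun x => ∑ i, ∑ j, SAVNS.pd (fun y => ucheck y i) j x ^ 2
    exact continuous_finset_sum _ fun i _ => continuous_finset_sum _ fun j _ =>
      ((SAVNS.pd_contDiff (hucheck_i i) j).continuous.pow 2)
  have hEqG : (∫ x in Ω, SAVNS.gradSq w x)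
      = 1/4 * (∫ x in Ω, SAVNS.gradSq (fun y i => uhat y i + un y i) x)
        + S/2 * (∫ x in Ω, SAVNS.gradIP (fun y i => uhat y i + un y i) ucheck x)
        + S^2/4 * (∫ x in Ω, SAVNS.gradSq ucheck x) := by
    rw [MeasureTheory.setIntegral_congr_fun hΩo.measurableSet (fun x hx => hptG x hx)]
    have iG1 : MeasureTheory.IntegrableOn
        (fun x => 1/4 * SAVNS.gradSq (fun y i => uhat y i + un y i) x) Ω := by
      exact (SAVNS.intOn hΩb cG1).const_mul _
    have iG2 : MeasureTheory.IntegrableOn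
        (fun x => S/2 * SAVNS.gradIP (fun y i => uhat y i + un y i) ucheck x) Ω := by
      exact (SAVNS.intOn hΩb cG2).const_mul _
    have iG3 : MeasureTheory.IntegrableOn (fun x => S^2/4 * SAVNS.gradSq ucheck x) Ω := by
      exact (SAVNS.intOn hΩb cG3).const_mul _
    have iG12 : MeasureTheory.IntegrableOn
        (fun x => 1/4 * SAVNS.gradSq (fun y i => uhat y i + un y i) x
          + S/2 * SAVNS.gradIP (fun y i => uhat y i + un y i) ucheck x) Ω := by
      exact iG1.add iG2
    rw [MeasureTheory.integral_add iG12 iG3, MeasureTheory.integral_add iG1 iG2,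
      MeasureTheory.integral_const_mul, MeasureTheory.integral_const_mul,
      MeasureTheory.integral_const_mul]
  -- decomposition of the force term
  have hptF : ∀ x ∈ Ω, (∑ i, f x i * w x i)
      = 1/2 * (∑ i, f x i * (un x i + uhat x i)) + S/2 * (∑ i, f x i * ucheck x i) := by
    intro x hx
    rw [Finset.mul_sum, Finset.mul_sum, ← Finset.sum_add_distrib]
    refine Finset.sum_congr rfl fun i _ => ?_
    have hwv : w x i = (un x i + (uhat x i + S * ucheck x i)) / 2 := by
      show (un x i + uv x i) / 2 = _
      rw [hdec_u x hx i]
    rw [hwv]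
    ring
  have cF1 : Continuous (fun x => ∑ i, f x i * (un x i + uhat x i)) :=
    continuous_finset_sum _ fun i _ =>
      (hf_i i).mul ((hun_i i).continuous.add (huhat_i i).continuous)
  have cF2 : Continuous (fun x => ∑ i, f x i * ucheck x i) :=
    continuous_finset_sum _ fun i _ => (hf_i i).mul (hucheck_i i).continuous
  have hEqF : (∫ x in Ω, ∑ i, f x i * w x i)
      = 1/2 * (∫ x in Ω, ∑ i, f x i * (un x i + uhat x i))
        + S/2 * (∫ x in Ω, ∑ i, f x i * ucheck x i) := by
    rw [MeasureTheory.setIntegral_congr_fun hΩo.measurableSet (fun x hx => hptF x hx)]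
    have iF1 : MeasureTheory.IntegrableOn
        (fun x => 1/2 * ∑ i, f x i * (un x i + uhat x i)) Ω := by
      exact (SAVNS.intOn hΩb cF1).const_mul _
    have iF2 : MeasureTheory.IntegrableOn (fun x => S/2 * ∑ i, f x i * ucheck x i) Ω := by
      exact (SAVNS.intOn hΩb cF2).const_mul _
    rw [MeasureTheory.integral_add iF1 iF2, MeasureTheory.integral_const_mul,
      MeasureTheory.integral_const_mul]
  have hF1 : SAVNS.ipL2 Ω f (fun y i => un y i + uhat y i)
      = ∫ x in Ω, ∑ i, f x i * (un x i + uhat x i) := rfl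
  have hF2 : SAVNS.ipL2 Ω f ucheck = ∫ x in Ω, ∑ i, f x i * ucheck x i := rfl
  rw [hF1, hF2]
  linear_combination hEqM - hEqQ - ν * hEqG + hEqF
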